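/- Let V be a finite-dimensional real vector space, B ⊂ V a convex body with 0 in its interior, Ψ the Minkowski norm (gauge) associated to B, x ∈ ∂B and v ∈ V. Then v is forward tangent to ∂B at x if and only if ∂⁺_xΨ(v) = 0. -/
import Mathlib

open Filter Topology

/-- `v` is *forward tangent* to `∂B` at `x` if there are a sequence `p i ∈ ∂B` with `p i → x`
and positive reals `c i` with `c i • (p i - x) → v`. -/
def IsForwardTangent {X : Type*} [NormedAddCommGroup X] [NormedSpace ℝ X]
    (B : Set X) (x v : X) : Prop :=
  ∃ (p : ℕ → X) (c : ℕ → ℝ), (∀ i, p i ∈ frontier B) ∧ (∀ i, 0 < c i) ∧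
    Tendsto p atTop (𝓝 x) ∧ Tendsto (fun i => c i • (p i - x)) atTop (𝓝 v)

/-- If `B` is a convex body with `0` in its interior, `Ψ = gauge B` its Minkowski norm,
`x ∈ ∂B` and `v ∈ V`, then `v` is forward tangent to `∂B` at `x` if and only if the one-sided
directional derivative `∂⁺ₓΨ(v) = lim_{s↓0} (Ψ(x + s v) - Ψ(x))/s` equals `0`. -/
theorem forwardTangent_iff_dirDeriv_eq_zero
    {V : Type*} [NormedAddCommGroup V] [NormedSpace ℝ V] [FiniteDimensional ℝ V]
    (B : Set V) (hBcomp : IsCompact B) (hBconv : Convex ℝ B)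
    (h0 : (0 : V) ∈ interior B)
    (x : V) (hx : x ∈ frontier B) (v : V) :
    IsForwardTangent B x v ↔
      Tendsto (fun s : ℝ => (gauge B (x + s • v) - gauge B x) / s) (𝓝[>] 0) (𝓝 0) := by
  have hB0 : B ∈ 𝓝 (0 : V) := mem_interior_iff_mem_nhds.mp h0
  have habs : Absorbent ℝ B := absorbent_nhds_zero hB0
  have hΨx : gauge B x = 1 := (gauge_eq_one_iff_mem_frontier hBconv hB0).mpr hx
  obtain ⟨K, hK⟩ := hBconv.lipschitz_gauge hB0
  -- slope monotonicity
  have mono : ∀ s t : ℝ, 0 < s → s ≤ t →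
      (gauge B (x + s • v) - 1) / s ≤ (gauge B (x + t • v) - 1) / t := by
    intro s t hs hst
    have ht : 0 < t := hs.trans_le hst
    obtain ⟨a, ha0, ha1, has⟩ : ∃ a : ℝ, 0 < a ∧ a ≤ 1 ∧ s = a * t :=
      ⟨s / t, div_pos hs ht, (div_le_one ht).mpr hst, (div_mul_cancel₀ s ht.ne').symm⟩
    have hxst : x + s • v = (1 - a) • x + a • (x + t • v) := by
      rw [smul_add, smul_smul, ← has]; module
    have h1 : gauge B (x + s • v) ≤ (1 - a) * gauge B x + a * gauge B (x + t • v) := by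
      rw [hxst]
      calc gauge B ((1 - a) • x + a • (x + t • v))
          ≤ gauge B ((1 - a) • x) + gauge B (a • (x + t • v)) := gauge_add_le hBconv habs _ _
        _ = (1 - a) * gauge B x + a * gauge B (x + t • v) := by
            rw [gauge_smul_of_nonneg (by linarith), gauge_smul_of_nonneg ha0.le]
            simp [smul_eq_mul]
    rw [hΨx] at h1
    rw [div_le_div_iff₀ hs ht]
    subst has
    nlinarith [mul_le_mul_of_nonneg_right h1 ht.le]
  constructor
  · rintro ⟨p, c, hpB, hc, hpx, hcv⟩
    simp only [hΨx]
    rcases eq_or_ne v 0 with rfl | hv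
    · have : ∀ s : ℝ, (gauge B (x + s • (0 : V)) - 1) / s = 0 := by
        intro s; simp [hΨx]
      simpa only [this] using tendsto_const_nhds
    have hvn : (0 : ℝ) < ‖v‖ := norm_pos_iff.mpr hv
    set w : ℕ → V := fun i => c i • (p i - x) with hw
    have hΨp : ∀ i, gauge B (p i) = 1 := fun i =>
      (gauge_eq_one_iff_mem_frontier hBconv hB0).mpr (hpB i)
    -- c → ∞
    have hctop : Tendsto c atTop atTop := by
      rw [tendsto_atTop]
      intro M
      have hM' : (0 : ℝ) < max M 1 := lt_of_lt_of_le one_pos (le_max_right _ _)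
      have h1 : ∀ᶠ i in atTop, ‖v‖ / 2 < ‖w i‖ :=
        (hcv.norm).eventually_const_lt (by linarith)
      have h2 : ∀ᶠ i in atTop, ‖p i - x‖ < ‖v‖ / (2 * max M 1) := by
        have : Tendsto (fun i => ‖p i - x‖) atTop (𝓝 0) := by
          simpa using (hpx.sub_const x).norm
        exact this.eventually_lt_const (by positivity)
      filter_upwards [h1, h2] with i hi1 hi2
      have hwi : ‖w i‖ = c i * ‖p i - x‖ := by
        rw [hw]; simp [norm_smul, abs_of_pos (hc i)]
      have hd0 : 0 < ‖p i - x‖ := by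
        rcases lt_or_ge 0 ‖p i - x‖ with h | h
        · exact h
        · have : ‖p i - x‖ = 0 := le_antisymm (by linarith [norm_nonneg (p i - x)]) (norm_nonneg _)
          rw [hwi, this, mul_zero] at hi1; linarith
      have : max M 1 < c i := by
        rw [hwi] at hi1
        have h3 : 2 * max M 1 * ‖p i - x‖ < ‖v‖ := by
          rw [lt_div_iff₀ (by positivity)] at hi2; linarith
        nlinarith [hc i]
      exact le_of_lt (lt_of_le_of_lt (le_max_left M 1) this)
    set s : ℕ → ℝ := fun i => (c i)⁻¹ with hsdef
    have hspos : ∀ i, 0 < s i := fun i => inv_pos.mpr (hc i)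
    have hs0 : Tendsto s atTop (𝓝 0) := tendsto_inv_atTop_zero.comp hctop
    -- the key bound
    have hbound : ∀ i, |(gauge B (x + s i • v) - 1) / s i| ≤ (K : ℝ) * ‖v - w i‖ := by
      intro i
      have hpi : x + s i • w i = p i := by
        rw [hw, hsdef]
        simp [inv_smul_smul₀ (hc i).ne']
      have hlip : |gauge B (x + s i • v) - 1| ≤ (K : ℝ) * (s i * ‖v - w i‖) := by
        have := hK.dist_le_mul (x + s i • v) (x + s i • w i)
        rw [hpi, hΨp i] at this
        rw [Real.dist_eq] at this
        calc |gauge B (x + s i • v) - 1| ≤ (K : ℝ) * dist (x + s i • v) (p i) := this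
          _ = (K : ℝ) * (s i * ‖v - w i‖) := by
              rw [← hpi, dist_eq_norm]
              congr 1
              rw [show x + s i • v - (x + s i • w i) = s i • (v - w i) by module]
              rw [norm_smul, Real.norm_eq_abs, abs_of_pos (hspos i)]
      rw [abs_div, abs_of_pos (hspos i), div_le_iff₀ (hspos i)]
      calc |gauge B (x + s i • v) - 1| ≤ (K : ℝ) * (s i * ‖v - w i‖) := hlip
        _ = (K : ℝ) * ‖v - w i‖ * s i := by ring
    have hwv : Tendsto (fun i => (K : ℝ) * ‖v - w i‖) atTop (𝓝 0) := by
      have : Tendsto (fun i => ‖v - w i‖) atTop (𝓝 0) := by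
        simpa using ((tendsto_const_nhds (x := v)).sub hcv).norm
      simpa using this.const_mul (K : ℝ)
    have hglim : Tendsto (fun i => (gauge B (x + s i • v) - 1) / s i) atTop (𝓝 0) :=
      squeeze_zero_norm (fun i => by rw [Real.norm_eq_abs]; exact hbound i) hwv
    -- nonnegativity of slopes
    have hnonneg : ∀ t : ℝ, 0 < t → 0 ≤ (gauge B (x + t • v) - 1) / t := by
      intro t ht
      by_contra hneg
      push_neg at hneg
      obtain ⟨i, hi1, hi2⟩ : ∃ i, s i < t ∧
          |(gauge B (x + s i • v) - 1) / s i| < -((gauge B (x + t • v) - 1) / t) := by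
        have e1 := hs0.eventually_lt_const ht
        have e2 := (Metric.tendsto_nhds.mp hglim (-((gauge B (x + t • v) - 1) / t))
          (by linarith))
        simp only [Real.dist_0_eq_abs] at e2
        exact (e1.and e2).exists
      have := mono (s i) t (hspos i) hi1.le
      rw [abs_lt] at hi2
      linarith [hi2.1]
    -- conclude
    rw [Metric.tendsto_nhds]
    intro ε hε
    obtain ⟨i, hi⟩ : ∃ i, |(gauge B (x + s i • v) - 1) / s i| < ε / 2 := by
      have := Metric.tendsto_nhds.mp hglim (ε / 2) (by positivity)
      simp only [Real.dist_0_eq_abs] at this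
      exact this.exists
    filter_upwards [Ioc_mem_nhdsGT (hspos i)] with t ht
    rw [Real.dist_0_eq_abs, abs_of_nonneg (hnonneg t ht.1)]
    have := mono t (s i) ht.1 ht.2
    have h2 : (gauge B (x + s i • v) - 1) / s i < ε / 2 := lt_of_abs_lt hi
    linarith
  · intro h
    set s : ℕ → ℝ := fun i => 1 / ((i : ℝ) + 1) with hsdef
    have hspos : ∀ i, 0 < s i := fun i => by positivity
    have hs0 : Tendsto s atTop (𝓝[>] (0 : ℝ)) := by
      apply tendsto_nhdsWithin_of_tendsto_nhds_of_eventually_within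
      · exact tendsto_one_div_add_atTop_nhds_zero_nat
      · exact Eventually.of_forall fun i => hspos i
    have htend : Tendsto (fun i => gauge B (x + s i • v)) atTop (𝓝 1) := by
      have h1 : Tendsto (fun i => x + s i • v) atTop (𝓝 x) := by
        have := ((hs0.mono_right nhdsWithin_le_nhds).smul_const v).const_add x
        simpa using this
      have := ((continuous_gauge hBconv hB0).tendsto x).comp h1
      rwa [hΨx] at this
    obtain ⟨N, hN⟩ : ∃ N, ∀ i ≥ N, (1 : ℝ) / 2 < gauge B (x + s i • v) :=
      eventually_atTop.mp (htend.eventually_const_lt (by norm_num))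
    have htpos : ∀ i, 0 < gauge B (x + s (i + N) • v) :=
      fun i => lt_trans (by norm_num) (hN _ (Nat.le_add_left N i))
    refine ⟨fun i => (gauge B (x + s (i + N) • v))⁻¹ • (x + s (i + N) • v),
      fun i => gauge B (x + s (i + N) • v) / s (i + N),
      ?_, ?_, ?_, ?_⟩
    · intro i
      rw [← gauge_eq_one_iff_mem_frontier hBconv hB0]
      rw [gauge_smul_of_nonneg (inv_nonneg.mpr (htpos i).le)]
      simp only [smul_eq_mul]
      exact inv_mul_cancel₀ (htpos i).ne'
    · exact fun i => div_pos (htpos i) (hspos _)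
    · have h1 : Tendsto (fun i => gauge B (x + s (i + N) • v)) atTop (𝓝 1) :=
        htend.comp (tendsto_add_atTop_nat N)
      have h2 : Tendsto (fun i => x + s (i + N) • v) atTop (𝓝 x) := by
        have := (((hs0.comp (tendsto_add_atTop_nat N)).mono_right
          nhdsWithin_le_nhds).smul_const v).const_add x
        simpa using this
      have := (h1.inv₀ one_ne_zero).smul h2
      simpa using this
    · have key : ∀ i, (gauge B (x + s (i + N) • v) / s (i + N)) •
            ((gauge B (x + s (i + N) • v))⁻¹ • (x + s (i + N) • v) - x)
          = v - ((gauge B (x + s (i + N) • v) - gauge B x) / s (i + N)) • x := by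
        intro i
        rw [hΨx]
        have hti : gauge B (x + s (i + N) • v) ≠ 0 := (htpos i).ne'
        have hsi : s (i + N) ≠ 0 := (hspos _).ne'
        match_scalars <;> field_simp <;> ring
      simp only [key]
      have hq : Tendsto (fun i => (gauge B (x + s (i + N) • v) - gauge B x) / s (i + N))
          atTop (𝓝 0) := h.comp (hs0.comp (tendsto_add_atTop_nat N))
      have := (tendsto_const_nhds (x := v)).sub (hq.smul_const x)
      simpa using this
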